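/- arXiv:2205.00794 — 3 statements merged into one kernel-verified Lean document; each statement's English description precedes it below -/
import Mathlib

section
/- Let r, q be positive integers, let R_x be an r×r real positive semidefinite matrix, R_y a q×q real positive semidefinite matrix, and R_xy an r×q real matrix, and assume the (r+q)×(r+q) block matrix [[R_x, R_xy],[R_xy^T, R_y]] is positive semidefinite. Fix ε > 0 and set R_e = R_y − R_xy^T (R_x + εI)^{-1} R_xy. If moreover R_x and R_y are positive definite, then the log-determinant mutual information I_LD^ε = (1/2) log det(R_y + εI) − (1/2) log det(R_e + εI) satisfies I_LD^ε ≥ 0, and I_LD^ε = 0 if and only if R_xy = 0. -/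
open Matrix


/-- product of reals each ≥ 1 is ≥ 1, and equals 1 iff each factor is 1. -/
lemma aux_prod_ge_one {ι : Type*} (s : Finset ι) (f : ι → ℝ) (hf : ∀ i ∈ s, 1 ≤ f i) :
    1 ≤ ∏ i ∈ s, f i ∧ ((∏ i ∈ s, f i) = 1 → ∀ i ∈ s, f i = 1) := by
  induction s using Finset.cons_induction with
  | empty => simp
  | cons a s ha ih =>
    obtain ⟨h1, h2⟩ := ih (fun i hi => hf i (Finset.mem_cons_of_mem hi))
    have hfa : 1 ≤ f a := hf a (Finset.mem_cons_self a s)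
    rw [Finset.prod_cons]
    constructor
    · nlinarith
    · intro h i hi
      have hfa1 : f a = 1 := by nlinarith
      rcases Finset.mem_cons.mp hi with rfl | hi'
      · exact hfa1
      · exact h2 (by rw [hfa1, one_mul] at h; exact h) i hi'

/-- det(1 + T) ≥ 1 for PSD real T, with equality iff T = 0. -/
lemma aux_det_one_add {n : Type*} [Fintype n] [DecidableEq n]
    {T : Matrix n n ℝ} (hT : T.PosSemidef) :
    1 ≤ (1 + T).det ∧ ((1 + T).det = 1 ↔ T = 0) := by
  have hH := hT.1
  set U : Matrix n n ℝ := (hH.eigenvectorUnitary : Matrix n n ℝ) with hU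
  have hUU : U * star U = 1 := (Matrix.mem_unitaryGroup_iff).mp hH.eigenvectorUnitary.2
  have hsp : T = U * diagonal (RCLike.ofReal ∘ hH.eigenvalues) * star U := hH.spectral_theorem
  have hdiag : diagonal (RCLike.ofReal ∘ hH.eigenvalues) = diagonal hH.eigenvalues := rfl
  have hone : (1 : Matrix n n ℝ) + T
      = U * diagonal (fun i => 1 + hH.eigenvalues i) * star U := by
    rw [show (diagonal fun i => 1 + hH.eigenvalues i) = 1 + diagonal hH.eigenvalues from by
        rw [← Matrix.diagonal_one, Matrix.diagonal_add],
      Matrix.mul_add, Matrix.add_mul, Matrix.mul_one, hUU, ← hdiag, ← hsp]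
  have hdet : (1 + T).det = ∏ i, (1 + hH.eigenvalues i) := by
    rw [hone, Matrix.det_mul_right_comm, hUU, one_mul, Matrix.det_diagonal]
  have hnn : ∀ i, (1 : ℝ) ≤ 1 + hH.eigenvalues i := fun i => by
    linarith [hT.eigenvalues_nonneg i]
  obtain ⟨hp1, hp2⟩ := aux_prod_ge_one Finset.univ (fun i => 1 + hH.eigenvalues i)
    (fun i _ => hnn i)
  constructor
  · rw [hdet]
    exact hp1
  · constructor
    · intro h
      rw [hdet] at h
      have heig : ∀ i, hH.eigenvalues i = 0 := fun i => by
        have := hp2 h i (Finset.mem_univ i); linarith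
      have : diagonal (RCLike.ofReal ∘ hH.eigenvalues) = (0 : Matrix n n ℝ) := by
        rw [hdiag]
        ext i j
        by_cases hij : i = j <;> simp [Matrix.diagonal, hij, heig]
      rw [hsp, this, Matrix.mul_zero, Matrix.zero_mul]
    · rintro rfl
      simp

/-- For C positive definite and S positive semidefinite:
`det C ≤ det (C + S)`, with equality iff `S = 0`. -/
lemma aux_det_add_psd {n : Type*} [Fintype n] [DecidableEq n]
    {C S : Matrix n n ℝ} (hC : C.PosDef) (hS : S.PosSemidef) :
    C.det ≤ (C + S).det ∧ ((C + S).det = C.det ↔ S = 0) := by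
  set L := (open scoped MatrixOrder in CFC.sqrt C) with hLdef
  have hL : L.PosSemidef := (open scoped MatrixOrder in (CFC.sqrt_nonneg C).posSemidef)
  have hLL : L * L = C := (open scoped MatrixOrder in CFC.sqrt_mul_sqrt_self C hC.posSemidef.nonneg)
  have hdetC : 0 < C.det := hC.det_pos
  have hdetL : L.det ≠ 0 := by
    intro h
    rw [← hLL, Matrix.det_mul, h, mul_zero] at hdetC
    exact lt_irrefl _ hdetC
  have hLinv : L * L⁻¹ = 1 := Matrix.mul_nonsing_inv L (by simpa using hdetL)
  have hLinv' : L⁻¹ * L = 1 := Matrix.nonsing_inv_mul L (by simpa using hdetL)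
  have hLinvH : (L⁻¹)ᴴ = L⁻¹ := by
    rw [Matrix.conjTranspose_nonsing_inv, hL.1.eq]
  set T := L⁻¹ * S * L⁻¹ with hTdef
  have hT : T.PosSemidef := by
    have := hS.conjTranspose_mul_mul_same (L⁻¹)
    rwa [hLinvH] at this
  have hCS : C + S = L * (1 + T) * L := by
    rw [Matrix.mul_add, Matrix.add_mul, mul_one, hLL, hTdef]
    congr 1
    rw [show L * (L⁻¹ * S * L⁻¹) * L = (L * L⁻¹) * S * (L⁻¹ * L) by
      simp only [Matrix.mul_assoc], hLinv, hLinv', Matrix.one_mul, Matrix.mul_one]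
  have hdet : (C + S).det = C.det * (1 + T).det := by
    rw [hCS, Matrix.det_mul, Matrix.det_mul, ← hLL, Matrix.det_mul]
    ring
  obtain ⟨h1, h2⟩ := aux_det_one_add hT
  have hST : S = 0 ↔ T = 0 := by
    constructor
    · rintro rfl; simp [hTdef]
    · intro h
      have : L * T * L = S := by
        rw [hTdef, show L * (L⁻¹ * S * L⁻¹) * L = (L * L⁻¹) * S * (L⁻¹ * L) by
          simp only [Matrix.mul_assoc], hLinv, hLinv', Matrix.one_mul, Matrix.mul_one]
      rw [← this, h, Matrix.mul_zero, Matrix.zero_mul]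
  constructor
  · rw [hdet]
    nlinarith
  · rw [hdet, hST]
    constructor
    · intro h
      apply h2.mp
      have h' : C.det * (1 + T).det = C.det * 1 := by rw [mul_one]; linarith
      exact mul_left_cancel₀ (ne_of_gt hdetC) h'
    · intro h
      rw [h2.mpr h, mul_one]

/-- Nonnegativity and equality case of the ε-regularized LD-mutual information
`I_LD^ε(x,y) = (1/2) log det(R_y + εI) − (1/2) log det(R_e + εI)` with
`R_e = R_y − R_xyᵀ (R_x + εI)⁻¹ R_xy`. -/
theorem ld_mutual_information_nonneg_and_eq_zero_iff
    {r q : ℕ} (hr : 0 < r) (hq : 0 < q)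
    (Rx : Matrix (Fin r) (Fin r) ℝ) (Ry : Matrix (Fin q) (Fin q) ℝ)
    (Rxy : Matrix (Fin r) (Fin q) ℝ)
    (hRx : Rx.PosSemidef) (hRy : Ry.PosSemidef)
    (hblock : (Matrix.fromBlocks Rx Rxy Rxyᵀ Ry).PosSemidef)
    (ε : ℝ) (hε : 0 < ε)
    (Re : Matrix (Fin q) (Fin q) ℝ)
    (hRe : Re = Ry - Rxyᵀ * (Rx + ε • (1 : Matrix (Fin r) (Fin r) ℝ))⁻¹ * Rxy)
    (hRxpd : Rx.PosDef) (hRypd : Ry.PosDef)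
    (ILD : ℝ)
    (hILD : ILD = (1 / 2) * Real.log (Ry + ε • (1 : Matrix (Fin q) (Fin q) ℝ)).det
        - (1 / 2) * Real.log (Re + ε • (1 : Matrix (Fin q) (Fin q) ℝ)).det) :
    0 ≤ ILD ∧ (ILD = 0 ↔ Rxy = 0) := by
  -- ε-regularized identity matrices are positive definite
  have hεr : (ε • (1 : Matrix (Fin r) (Fin r) ℝ)).PosDef := by
    rw [Matrix.smul_one_eq_diagonal]
    exact Matrix.posDef_diagonal_iff.mpr fun _ => hε
  have hεq : (ε • (1 : Matrix (Fin q) (Fin q) ℝ)).PosDef := by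
    rw [Matrix.smul_one_eq_diagonal]
    exact Matrix.posDef_diagonal_iff.mpr fun _ => hε
  set A := Rx + ε • (1 : Matrix (Fin r) (Fin r) ℝ) with hAdef
  have hA : A.PosDef := Matrix.PosDef.posSemidef_add hRx hεr
  haveI : Invertible A := hA.isUnit.invertible
  have hAinv : A⁻¹.PosDef := hA.inv
  -- conjTranspose is transpose over ℝ
  have hct : Rxyᴴ = Rxyᵀ := Matrix.conjTranspose_eq_transpose_of_trivial Rxy
  -- the zero-padded ε-block is PSD
  have h0 : (Matrix.fromBlocks (ε • (1 : Matrix (Fin r) (Fin r) ℝ)) (0 : Matrix (Fin r) (Fin q) ℝ)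
      (0 : Matrix (Fin q) (Fin r) ℝ) (0 : Matrix (Fin q) (Fin q) ℝ)).PosSemidef := by
    haveI : Invertible (ε • (1 : Matrix (Fin r) (Fin r) ℝ)) := hεr.isUnit.invertible
    have h00 : (0 : Matrix (Fin q) (Fin r) ℝ) = (0 : Matrix (Fin r) (Fin q) ℝ)ᴴ := by simp
    rw [h00, Matrix.PosDef.fromBlocks₁₁ _ _ hεr]
    simpa using Matrix.PosSemidef.zero
  -- fromBlocks A Rxy Rxyᵀ Ry is PSD
  have hblockA : (Matrix.fromBlocks A Rxy Rxyᵀ Ry).PosSemidef := by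
    have := hblock.add h0
    rwa [show Matrix.fromBlocks Rx Rxy Rxyᵀ Ry +
        Matrix.fromBlocks (ε • (1 : Matrix (Fin r) (Fin r) ℝ)) 0 0 0
        = Matrix.fromBlocks A Rxy Rxyᵀ Ry by
      rw [Matrix.fromBlocks_add]; simp [hAdef]] at this
  -- Schur complement: Re is PSD
  have hRePSD : Re.PosSemidef := by
    rw [← hct] at hblockA
    rw [hRe, ← hct]
    exact (Matrix.PosDef.fromBlocks₁₁ Rxy Ry hA).mp hblockA
  -- the matrices B = Ry + εI and C = Re + εI
  set B := Ry + ε • (1 : Matrix (Fin q) (Fin q) ℝ) with hBdef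
  set C := Re + ε • (1 : Matrix (Fin q) (Fin q) ℝ) with hCdef
  have hB : B.PosDef := Matrix.PosDef.posSemidef_add hRy hεq
  have hC : C.PosDef := Matrix.PosDef.posSemidef_add hRePSD hεq
  set S := Rxyᵀ * A⁻¹ * Rxy with hSdef
  have hS : S.PosSemidef := by
    have := hAinv.posSemidef.conjTranspose_mul_mul_same Rxy
    rwa [hct] at this
  have hBCS : B = C + S := by
    rw [hBdef, hCdef, hRe, hSdef]
    abel
  obtain ⟨hle, hiff⟩ := aux_det_add_psd hC hS
  rw [← hBCS] at hle hiff
  have hdetC : 0 < C.det := hC.det_pos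
  have hdetB : 0 < B.det := hB.det_pos
  -- S = 0 ↔ Rxy = 0
  have hSRxy : S = 0 ↔ Rxy = 0 := by
    constructor
    · intro h
      by_contra hne
      obtain ⟨i, j, hij⟩ : ∃ i j, Rxy i j ≠ 0 := by
        by_contra hc
        push_neg at hc
        exact hne (Matrix.ext hc)
      set v : Fin q → ℝ := Pi.single j 1 with hv
      set w := Rxy *ᵥ v with hw
      have hwne : w ≠ 0 := by
        intro hw0
        apply hij
        have := congrFun hw0 i
        simpa [hw, hv, Matrix.mulVec_single] using this
      have hpos : 0 < star w ⬝ᵥ (A⁻¹ *ᵥ w) := hAinv.dotProduct_mulVec_pos hwne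
      have hzero : star w ⬝ᵥ (A⁻¹ *ᵥ w) = star v ⬝ᵥ (S *ᵥ v) := by
        simp only [hSdef, hw, ← Matrix.mulVec_mulVec, Matrix.dotProduct_mulVec, star_trivial,
          Matrix.vecMul_transpose]
      rw [hzero, h] at hpos
      simp at hpos
    · rintro rfl
      simp [hSdef]
  -- finish
  have hlog : Real.log C.det ≤ Real.log B.det :=
    Real.log_le_log hdetC hle
  constructor
  · rw [hILD]
    linarith
  · rw [hILD]
    constructor
    · intro h
      have hlogeq : Real.log B.det = Real.log C.det := by linarith
      have hdeteq : B.det = C.det :=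
        Real.log_injOn_pos (Set.mem_Ioi.mpr hdetB) (Set.mem_Ioi.mpr hdetC) hlogeq
      exact hSRxy.mp (hiff.mp hdeteq)
    · intro h
      have : S = 0 := hSRxy.mpr h
      have hdeteq : B.det = C.det := hiff.mpr this
      rw [hdeteq]
      ring
end

section
/- Let S be an r×N real matrix and Y an M×N real matrix, with sample covariances R̂_s = (1/N) S C S^T, R̂_y = (1/N) Y C Y^T and cross-covariance R̂_sy = (1/N) S C Y^T where C = I − (1/N) 𝟙 𝟙^T, and let ε > 0. Assume R̂_s and R̂_y are positive definite. Then the deterministic LD-mutual information Î_LD^ε(Y,S) = (1/2) log det(R̂_s + εI) − (1/2) log det(R̂_s − R̂_sy (R̂_y + εI)^{-1} R̂_sy^T + εI) satisfies Î_LD^ε(Y,S) ≥ 0, with equality if and only if R̂_sy = 0. -/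
open Matrix

lemma myPosDef_smul {n : Type*} [Fintype n] {A : Matrix n n ℝ} (hA : A.PosDef)
    {c : ℝ} (hc : 0 < c) : (c • A).PosDef := by
  refine ⟨?_, fun x hx => ?_⟩
  · unfold Matrix.IsHermitian
    rw [conjTranspose_smul, hA.1, star_trivial]
  · exact (hA.smul hc).2 hx

lemma det_one_add_psd {n : Type*} [Fintype n] [DecidableEq n]
    {Q : Matrix n n ℝ} (hQ : Q.PosSemidef) :
    1 ≤ (1 + Q).det ∧ ((1 + Q).det = 1 ↔ Q = 0) := by
  have hH := hQ.isHermitian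
  set U : Matrix n n ℝ := (Matrix.IsHermitian.eigenvectorUnitary hH : Matrix n n ℝ) with hUdef
  set f : n → ℝ := RCLike.ofReal ∘ hH.eigenvalues with hfdef
  have hspec : Q = U * diagonal f * star U := hH.spectral_theorem
  have hU : U * star U = 1 :=
    (Matrix.mem_unitaryGroup_iff).mp (Matrix.IsHermitian.eigenvectorUnitary hH).2
  have h1 : 1 + Q = U * (1 + diagonal f) * star U := by
    rw [mul_add, add_mul, mul_one, hU, hspec]
  have hdet : (1 + Q).det = ∏ i, (1 + f i) := by
    have hD : (1 : Matrix n n ℝ) + diagonal f = diagonal (fun i => 1 + f i) := by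
      ext i j
      by_cases h : i = j <;> simp [h, diagonal_apply, one_apply]
    rw [h1, det_mul_right_comm, hU, one_mul, hD, det_diagonal]
  have hnn : ∀ i, 0 ≤ f i := by
    intro i
    simpa [hfdef] using hQ.eigenvalues_nonneg i
  have hge : 1 ≤ ∏ i, (1 + f i) := by
    have := Finset.prod_le_prod (s := Finset.univ) (f := fun _ : n => (1 : ℝ))
      (g := fun i => 1 + f i) (fun i _ => zero_le_one) (fun i _ => by linarith [hnn i])
    simpa using this
  refine ⟨hdet ▸ hge, ?_⟩
  constructor
  · intro h
    rw [hdet] at h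
    have hf0 : f = 0 := by
      funext i
      simp only [Pi.zero_apply]
      by_contra hfi
      have hpos : 0 < f i := lt_of_le_of_ne (hnn i) (Ne.symm hfi)
      have hlt : (1 : ℝ) < ∏ j, (1 + f j) := by
        have := Finset.prod_lt_prod (s := Finset.univ) (f := fun _ : n => (1 : ℝ))
          (g := fun j => 1 + f j) (fun j _ => zero_lt_one)
          (fun j _ => by linarith [hnn j])
          ⟨i, Finset.mem_univ i, by linarith⟩
        simpa using this
      rw [h] at hlt
      exact lt_irrefl _ hlt
    have hd0 : Matrix.diagonal (0 : n → ℝ) = 0 := by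
      ext i j
      by_cases hij : i = j <;> simp [hij]
    rw [hspec, hf0, hd0, mul_zero, zero_mul]
  · rintro rfl
    simp

open scoped MatrixOrder in
lemma psd_sqrt_exists {n : Type*} [Fintype n] [DecidableEq n] {A : Matrix n n ℝ}
    (hA : A.PosSemidef) : ∃ F : Matrix n n ℝ, F * F = A ∧ F.IsHermitian :=
  ⟨CFC.sqrt A, CFC.sqrt_mul_sqrt_self A hA.nonneg, (CFC.sqrt_nonneg A).posSemidef.isHermitian⟩

lemma det_add_psd {n : Type*} [Fintype n] [DecidableEq n]
    {E P : Matrix n n ℝ} (hE : E.PosDef) (hP : P.PosSemidef) :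
    E.det ≤ (E + P).det ∧ ((E + P).det = E.det ↔ P = 0) := by
  obtain ⟨F, hFF, hFherm⟩ := psd_sqrt_exists hE.posSemidef
  have hdetF : F.det * F.det = E.det := by rw [← det_mul, hFF]
  have hdetFne : F.det ≠ 0 := by
    intro h
    have := hE.det_pos
    rw [← hdetF, h, mul_zero] at this
    exact lt_irrefl _ this
  have hFinv : F * F⁻¹ = 1 := mul_nonsing_inv F (isUnit_iff_ne_zero.mpr hdetFne)
  have hFinv' : F⁻¹ * F = 1 := nonsing_inv_mul F (isUnit_iff_ne_zero.mpr hdetFne)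
  have hGherm : (F⁻¹).IsHermitian := by
    unfold Matrix.IsHermitian
    rw [conjTranspose_nonsing_inv, hFherm]
  set Q : Matrix n n ℝ := F⁻¹ * P * F⁻¹ with hQdef
  have hQpsd : Q.PosSemidef := by
    have := hP.mul_mul_conjTranspose_same F⁻¹
    rwa [hGherm] at this
  have hEP : E + P = F * (1 + Q) * F := by
    rw [mul_add, add_mul, mul_one, hFF, hQdef]
    congr 1
    symm
    calc F * (F⁻¹ * P * F⁻¹) * F = (F * F⁻¹) * P * (F⁻¹ * F) := by
          simp only [Matrix.mul_assoc]
      _ = P := by rw [hFinv, hFinv', one_mul, Matrix.mul_one]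
    
  have hdet : (E + P).det = E.det * (1 + Q).det := by
    rw [hEP, det_mul, det_mul, ← hdetF]; ring
  obtain ⟨hge, heq⟩ := det_one_add_psd hQpsd
  constructor
  · rw [hdet]
    nlinarith [hE.det_pos]
  · rw [hdet]
    constructor
    · intro h
      have h1 : (1 + Q).det = 1 :=
        mul_left_cancel₀ (ne_of_gt hE.det_pos) (by rw [h, mul_one])
      have hQ0 := heq.mp h1
      have : P = F * Q * F := by
        rw [hQdef]
        calc P = (F * F⁻¹) * P * (F⁻¹ * F) := by rw [hFinv, hFinv', one_mul, Matrix.mul_one]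
          _ = F * (F⁻¹ * P * F⁻¹) * F := by simp only [Matrix.mul_assoc]
      rw [this, hQ0, mul_zero, zero_mul]
    · rintro rfl
      have hQ0 : Q = 0 := by simp [hQdef]
      rw [hQ0]
      simp


/-- Nonnegativity and equality case of the deterministic ε-regularized
LD-mutual information
`Î_LD^ε(Y,S) = (1/2) log det(R̂_s + εI) − (1/2) log det(R̂_e + εI)` with
`R̂_e = R̂_s − R̂_sy (R̂_y + εI)⁻¹ R̂_syᵀ`. -/
theorem deterministic_ld_mutual_information_nonneg
    {r M N : ℕ} (S : Matrix (Fin r) (Fin N) ℝ) (Y : Matrix (Fin M) (Fin N) ℝ)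
    (C : Matrix (Fin N) (Fin N) ℝ)
    (hC : C = 1 - (1 / N : ℝ) • Matrix.vecMulVec (fun _ => (1 : ℝ))
        (fun _ => (1 : ℝ)))
    (Rs : Matrix (Fin r) (Fin r) ℝ) (hRs : Rs = (1 / N : ℝ) • (S * C * Sᵀ))
    (Ry : Matrix (Fin M) (Fin M) ℝ) (hRy : Ry = (1 / N : ℝ) • (Y * C * Yᵀ))
    (Rsy : Matrix (Fin r) (Fin M) ℝ) (hRsy : Rsy = (1 / N : ℝ) • (S * C * Yᵀ))
    (ε : ℝ) (hε : 0 < ε)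
    (hRspd : Rs.PosDef) (hRypd : Ry.PosDef)
    (ILD : ℝ)
    (hILD : ILD = (1 / 2) * Real.log (Rs + ε • (1 : Matrix (Fin r) (Fin r) ℝ)).det
        - (1 / 2) * Real.log (Rs - Rsy * (Ry + ε • (1 : Matrix (Fin M) (Fin M) ℝ))⁻¹ * Rsyᵀ
            + ε • (1 : Matrix (Fin r) (Fin r) ℝ)).det) :
    0 ≤ ILD ∧ (ILD = 0 ↔ Rsy = 0) := by
  have hNn : (0:ℝ) ≤ 1 / N := by positivity
  set c : ℝ := 1 / N with hc
  set J : Matrix (Fin N) (Fin N) ℝ :=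
    Matrix.vecMulVec (fun _ => (1:ℝ)) (fun _ => (1:ℝ)) with hJ
  -- C is symmetric
  have hCsym : Cᵀ = C := by
    ext i j
    rw [transpose_apply, hC]
    by_cases h : i = j
    · subst h; rfl
    · simp [Matrix.sub_apply, Matrix.one_apply, h, Ne.symm h, hJ, Matrix.vecMulVec_apply]
  -- J * J = N • J
  have hJJ : J * J = (N : ℝ) • J := by
    ext i j
    simp [hJ, Matrix.mul_apply, Matrix.vecMulVec_apply, Finset.sum_const,
      Finset.card_univ]
  have hNc : c * c * (N:ℝ) = c := by
    rcases Nat.eq_zero_or_pos N with h | h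
    · subst h; simp [hc]
    · have : (N:ℝ) ≠ 0 := Nat.cast_ne_zero.mpr (Nat.pos_iff_ne_zero.mp h)
      rw [hc]; field_simp
  -- C is idempotent
  have hCC : C * C = C := by
    have h1 : (c • J) * (c • J) = (c * c * (N:ℝ)) • J := by
      rw [smul_mul_assoc, mul_smul_comm, hJJ, smul_smul, smul_smul]
    rw [hC]
    calc (1 - c • J) * (1 - c • J)
        = 1 - c • J - ((c • J) - (c • J) * (c • J)) := by
          rw [sub_mul, one_mul, mul_sub, Matrix.mul_one]
      _ = 1 - c • J := by rw [h1, hNc]; abel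
  -- square-root factorisations
  set a : ℝ := Real.sqrt c with ha
  have haa : a * a = c := Real.mul_self_sqrt hNn
  set Z : Matrix (Fin r) (Fin N) ℝ := a • (S * C) with hZ
  set W : Matrix (Fin M) (Fin N) ℝ := a • (Y * C) with hW
  have hZt : Zᵀ = a • (C * Sᵀ) := by
    rw [hZ, transpose_smul, transpose_mul, hCsym]
  have hWt : Wᵀ = a • (C * Yᵀ) := by
    rw [hW, transpose_smul, transpose_mul, hCsym]
  have hassoc : ∀ {p q : ℕ} (U : Matrix (Fin p) (Fin N) ℝ) (V : Matrix (Fin N) (Fin q) ℝ),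
      U * C * (C * V) = U * C * V := by
    intro p q U V
    rw [← Matrix.mul_assoc, Matrix.mul_assoc U C C, hCC]
  have hZZ : Z * Zᵀ = Rs := by
    rw [hZ, hZt, Matrix.smul_mul, Matrix.mul_smul, smul_smul, haa, hassoc, hRs]
  have hWW : W * Wᵀ = Ry := by
    rw [hW, hWt, Matrix.smul_mul, Matrix.mul_smul, smul_smul, haa, hassoc, hRy]
  have hZW : Z * Wᵀ = Rsy := by
    rw [hZ, hWt, Matrix.smul_mul, Matrix.mul_smul, smul_smul, haa, hassoc, hRsy]
  -- positive definite regularized matrices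
  have hsmr : (ε • (1 : Matrix (Fin r) (Fin r) ℝ)).PosDef :=
    myPosDef_smul Matrix.PosDef.one hε
  have hsmM : (ε • (1 : Matrix (Fin M) (Fin M) ℝ)).PosDef :=
    myPosDef_smul Matrix.PosDef.one hε
  have hsmN : (ε • (1 : Matrix (Fin N) (Fin N) ℝ)).PosDef :=
    myPosDef_smul Matrix.PosDef.one hε
  set B : Matrix (Fin M) (Fin M) ℝ := Ry + ε • 1 with hBdef
  have hB : B.PosDef := hRypd.add hsmM
  have hBdet : IsUnit B.det := isUnit_iff_ne_zero.mpr (ne_of_gt hB.det_pos)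
  set G : Matrix (Fin N) (Fin N) ℝ := Wᵀ * W + ε • 1 with hGdef
  have hWtW : (Wᵀ * W).PosSemidef := by
    have := Matrix.posSemidef_conjTranspose_mul_self W
    rwa [conjTranspose_eq_transpose_of_trivial] at this
  have hG : G.PosDef := Matrix.PosDef.posSemidef_add hWtW hsmN
  have hGdet : IsUnit G.det := isUnit_iff_ne_zero.mpr (ne_of_gt hG.det_pos)
  -- push-through identity
  have hkey : Wᵀ * B = G * Wᵀ := by
    rw [hBdef, hGdef, ← hWW, Matrix.mul_add, Matrix.add_mul]
    congr 1
    · rw [Matrix.mul_assoc]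
    · rw [Matrix.mul_smul, Matrix.smul_mul, Matrix.mul_one, Matrix.one_mul]
  have h2 : Wᵀ = G * (Wᵀ * B⁻¹) := by
    rw [← Matrix.mul_assoc, ← hkey, Matrix.mul_assoc, mul_nonsing_inv B hBdet,
      Matrix.mul_one]
  have hPT : Wᵀ * B⁻¹ = G⁻¹ * Wᵀ := by
    calc Wᵀ * B⁻¹ = (G⁻¹ * G) * (Wᵀ * B⁻¹) := by
          rw [nonsing_inv_mul G hGdet, Matrix.one_mul]
      _ = G⁻¹ * (G * (Wᵀ * B⁻¹)) := by rw [Matrix.mul_assoc]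
      _ = G⁻¹ * Wᵀ := by rw [← h2]
  have hWG : Wᵀ * W = G - ε • 1 := by rw [hGdef]; abel
  have hMeq : (1 : Matrix (Fin N) (Fin N) ℝ) - Wᵀ * B⁻¹ * W = ε • G⁻¹ := by
    rw [hPT, Matrix.mul_assoc, hWG, Matrix.mul_sub, nonsing_inv_mul G hGdet,
      Matrix.mul_smul, Matrix.mul_one, sub_sub_cancel]
  -- the Schur-type matrix is positive definite
  set P : Matrix (Fin r) (Fin r) ℝ := Rsy * B⁻¹ * Rsyᵀ with hPdef
  have hPpsd : P.PosSemidef := by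
    have := (hB.inv.posSemidef).mul_mul_conjTranspose_same Rsy
    rwa [conjTranspose_eq_transpose_of_trivial] at this
  have hWZ : W * Zᵀ = Rsyᵀ := by
    rw [← hZW, transpose_mul, transpose_transpose]
  have hE1 : Z * ((1:Matrix (Fin N) (Fin N) ℝ) - Wᵀ * B⁻¹ * W) * Zᵀ = Rs - P := by
    rw [Matrix.mul_sub, Matrix.sub_mul, Matrix.mul_one, hZZ, hPdef]
    congr 1
    calc Z * (Wᵀ * B⁻¹ * W) * Zᵀ = (Z * Wᵀ) * B⁻¹ * (W * Zᵀ) := by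
          simp only [Matrix.mul_assoc]
      _ = Rsy * B⁻¹ * Rsyᵀ := by rw [hZW, hWZ]
  have hZMZ : (Z * (ε • G⁻¹) * Zᵀ).PosSemidef := by
    have := (myPosDef_smul hG.inv hε).posSemidef.mul_mul_conjTranspose_same Z
    rwa [conjTranspose_eq_transpose_of_trivial] at this
  have hRsP : Rs - P = Z * (ε • G⁻¹) * Zᵀ := by rw [← hMeq, hE1]
  have hEpd : (Rs - P + ε • (1 : Matrix (Fin r) (Fin r) ℝ)).PosDef := by
    refine Matrix.PosDef.posSemidef_add ?_ hsmr
    rw [hRsP]; exact hZMZ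
  have hApd : (Rs + ε • (1 : Matrix (Fin r) (Fin r) ℝ)).PosDef := hRspd.add hsmr
  have hAEP : Rs + ε • (1 : Matrix (Fin r) (Fin r) ℝ)
      = (Rs - P + ε • (1 : Matrix (Fin r) (Fin r) ℝ)) + P := by abel
  obtain ⟨hle, hiff⟩ := det_add_psd hEpd hPpsd
  rw [← hAEP] at hle hiff
  -- P = 0 ↔ Rsy = 0
  have hPRsy : P = 0 ↔ Rsy = 0 := by
    constructor
    · intro h
      obtain ⟨Qb, hQQ, hQherm⟩ := psd_sqrt_exists hB.inv.posSemidef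
      have h2 : (Rsy * Qb) * (Rsy * Qb)ᴴ = 0 := by
        rw [conjTranspose_mul, hQherm.eq, conjTranspose_eq_transpose_of_trivial]
        calc Rsy * Qb * (Qb * Rsyᵀ) = Rsy * (Qb * Qb) * Rsyᵀ := by
              simp only [Matrix.mul_assoc]
          _ = P := by rw [hQQ, hPdef]
          _ = 0 := h
      have h3 : Rsy * Qb = 0 := self_mul_conjTranspose_eq_zero.mp h2
      have hdq : Qb.det ≠ 0 := by
        intro h0
        have hpos := hB.inv.det_pos
        rw [← hQQ, det_mul, h0, mul_zero] at hpos
        exact lt_irrefl _ hpos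
      calc Rsy = Rsy * (Qb * Qb⁻¹) := by
            rw [mul_nonsing_inv Qb (isUnit_iff_ne_zero.mpr hdq), Matrix.mul_one]
        _ = (Rsy * Qb) * Qb⁻¹ := by rw [Matrix.mul_assoc]
        _ = 0 := by rw [h3, Matrix.zero_mul]
    · intro h
      rw [hPdef, h, Matrix.zero_mul, Matrix.zero_mul]
  -- conclude
  have hdEpos := hEpd.det_pos
  have hdApos := hApd.det_pos
  have hlog : Real.log (Rs - P + ε • (1 : Matrix (Fin r) (Fin r) ℝ)).det
      ≤ Real.log (Rs + ε • (1 : Matrix (Fin r) (Fin r) ℝ)).det :=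
    Real.log_le_log hdEpos hle
  constructor
  · rw [hILD]; linarith
  · rw [hILD, ← hPRsy, ← hiff]
    constructor
    · intro h
      have hloge : Real.log (Rs + ε • (1 : Matrix (Fin r) (Fin r) ℝ)).det
          = Real.log (Rs - P + ε • (1 : Matrix (Fin r) (Fin r) ℝ)).det := by linarith
      exact Real.log_injOn_pos (Set.mem_Ioi.mpr hdApos) (Set.mem_Ioi.mpr hdEpos) hloge
    · intro h
      rw [h]; ring
end

section
/- Fix N ≥ 1, ε > 0, an M×N real matrix Y, and let C = I − (1/N) 𝟙 𝟙^T. For S ∈ ℝ^{r×N} define R̂_s = (1/N) S C S^T, R̂_sy = (1/N) S C Y^T, R̂_y = (1/N) Y C Y^T, R̂_e = R̂_s − R̂_sy (R̂_y + εI)^{-1} R̂_sy^T, and the objective F(S) = (1/2) log det(R̂_s + εI) − (1/2) log det(R̂_e + εI). If R̂_e + εI is positive definite at S, then F is differentiable at S with gradient ∇_S F = (1/N) (R̂_s + εI)^{-1} S C − (1/N) (R̂_e + εI)^{-1} (S − R̂_sy (R̂_y + εI)^{-1} Y) C; i.e., the derivative of F at S in direction Δ ∈ ℝ^{r×N} equals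 trace((∇_S F)^T Δ). -/
set_option linter.unusedSectionVars false

open Matrix

attribute [local instance] Matrix.frobeniusNormedAddCommGroup
  Matrix.frobeniusNormedSpace

section Aux

variable {m n p : Type*} [Fintype m] [Fintype n] [Fintype p]

noncomputable def rmulCLM (B : Matrix n p ℝ) : Matrix m n ℝ →L[ℝ] Matrix m p ℝ :=
  LinearMap.toContinuousLinearMap
  { toFun := fun X => X * B
    map_add' := fun X Y => Matrix.add_mul X Y B
    map_smul' := fun c X => Matrix.smul_mul c X B }

@[simp] lemma rmulCLM_apply (B : Matrix n p ℝ) (X : Matrix m n ℝ) :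
    rmulCLM B X = X * B := rfl

noncomputable def mulB :
    Matrix m n ℝ →L[ℝ] Matrix n p ℝ →L[ℝ] Matrix m p ℝ :=
  LinearMap.toContinuousLinearMap
  { toFun := fun A => LinearMap.toContinuousLinearMap
      { toFun := fun X => A * X
        map_add' := fun X Y => Matrix.mul_add A X Y
        map_smul' := fun c X => Matrix.mul_smul A c X }
    map_add' := by
      intro A B
      refine ContinuousLinearMap.ext fun X => ?_
      exact Matrix.add_mul A B X
    map_smul' := by
      intro c A
      refine ContinuousLinearMap.ext fun X => ?_
      exact Matrix.smul_mul c A X }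

@[simp] lemma mulB_apply (A : Matrix m n ℝ) (X : Matrix n p ℝ) :
    mulB A X = A * X := rfl

noncomputable def tCLM : Matrix m n ℝ →L[ℝ] Matrix n m ℝ :=
  LinearMap.toContinuousLinearMap
  { toFun := Matrix.transpose
    map_add' := fun X Y => Matrix.transpose_add X Y
    map_smul' := fun c X => Matrix.transpose_smul c X }

@[simp] lemma tCLM_apply (X : Matrix m n ℝ) : tCLM X = Xᵀ := rfl

noncomputable def toPiCLM (n : Type*) [Fintype n] :
    Matrix n n ℝ →L[ℝ] (∀ _ : n, n → ℝ) :=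
  LinearMap.toContinuousLinearMap
  { toFun := fun M i => M i
    map_add' := fun _ _ => rfl
    map_smul' := fun _ _ => rfl }

@[simp] lemma toPiCLM_apply (M : Matrix n n ℝ) (i : n) : toPiCLM n M i = M i := rfl

noncomputable def detCMM (n : Type*) [Fintype n] [DecidableEq n] :
    ContinuousMultilinearMap ℝ (fun _ : n => n → ℝ) ℝ where
  toMultilinearMap := (Matrix.detRowAlternating (n := n) (R := ℝ)).toMultilinearMap
  cont := by
    exact Continuous.matrix_det (continuous_id : Continuous (id : Matrix n n ℝ → _))

end Aux

section Det

variable {n : Type*} [Fintype n] [DecidableEq n]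

lemma sum_updateRow_det (A Δ : Matrix n n ℝ) :
    ∑ i, (A.updateRow i (Δ i)).det = (Matrix.adjugate A * Δ).trace := by
  have h : ∀ i, (A.updateRow i (Δ i)).det = ∑ j, Δ i j * Matrix.adjugate A j i := by
    intro i
    rw [← Matrix.cramer_transpose_apply]
    have hΔ : (Δ i : n → ℝ) = ∑ j, Δ i j • (Pi.single j (1 : ℝ) : n → ℝ) := by
      ext k
      simp [Pi.single_apply, eq_comm]
    conv_lhs => rw [hΔ]
    rw [map_sum, Finset.sum_apply]
    refine Finset.sum_congr rfl fun j _ => ?_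
    rw [_root_.map_smul]
    simp [Matrix.adjugate_def, smul_eq_mul]
  simp only [h, Matrix.trace, Matrix.diag, Matrix.mul_apply]
  rw [Finset.sum_comm]
  simp [mul_comm]

lemma det_hasFDerivAt (A : Matrix n n ℝ) :
    HasFDerivAt (fun M : Matrix n n ℝ => M.det)
      (((detCMM n).linearDeriv (toPiCLM n A)).comp (toPiCLM n)) A := by
  have h1 := (detCMM n).hasFDerivAt (x := toPiCLM n A)
  have h2 := (toPiCLM n).hasFDerivAt (x := A)
  exact h1.comp A h2

lemma det_deriv_apply (A Δ : Matrix n n ℝ) :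
    (((detCMM n).linearDeriv (toPiCLM n A)).comp (toPiCLM n)) Δ
      = (Matrix.adjugate A * Δ).trace := by
  rw [← sum_updateRow_det A Δ]
  rw [ContinuousLinearMap.comp_apply, ContinuousMultilinearMap.linearDeriv_apply]
  rfl

lemma logdet_hasFDerivAt (A : Matrix n n ℝ) (h : A.det ≠ 0) :
    ∃ L : Matrix n n ℝ →L[ℝ] ℝ,
      HasFDerivAt (fun M : Matrix n n ℝ => Real.log M.det) L A ∧
      ∀ Δ, L Δ = (A⁻¹ * Δ).trace := by
  refine ⟨_, (Real.hasDerivAt_log h).comp_hasFDerivAt A (det_hasFDerivAt A), fun Δ => ?_⟩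
  change A.det⁻¹ • ((((detCMM n).linearDeriv (toPiCLM n A)).comp (toPiCLM n)) Δ) = _
  rw [det_deriv_apply, Matrix.inv_def,
    Ring.inverse_eq_inv', Matrix.smul_mul, Matrix.trace_smul]

lemma logdet_comp {E : Type*} [NormedAddCommGroup E] [NormedSpace ℝ E]
    {f : E → Matrix n n ℝ} {f' : E →L[ℝ] Matrix n n ℝ} {x : E}
    (hf : HasFDerivAt f f' x) (h : (f x).det ≠ 0) :
    ∃ L : E →L[ℝ] ℝ,
      HasFDerivAt (fun y => Real.log (f y).det) L x ∧
      ∀ Δ, L Δ = ((f x)⁻¹ * f' Δ).trace := by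
  obtain ⟨L0, hL0, hev⟩ := logdet_hasFDerivAt (f x) h
  exact ⟨L0.comp f', hL0.comp x hf, fun Δ => by
    rw [ContinuousLinearMap.comp_apply, hev]⟩

end Det

lemma trace_mul_mul_transpose {a b c : Type*} [Fintype a] [Fintype b] [Fintype c]
    (U : Matrix a b ℝ) (Δ : Matrix b c ℝ) (V : Matrix c a ℝ) :
    (U * Δ * V).trace = (Uᵀ * Vᵀ * Δᵀ).trace := by
  rw [← Matrix.trace_transpose (U * Δ * V), Matrix.transpose_mul, Matrix.transpose_mul,
    Matrix.trace_mul_comm, Matrix.mul_assoc, Matrix.trace_mul_comm, Matrix.mul_assoc]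

lemma conv1 {k l : Type*} [Fintype k] [Fintype l]
    (P : Matrix k k ℝ) (hP : Pᵀ = P) (V Δ : Matrix k l ℝ) :
    (P * (V * Δᵀ)).trace = (Vᵀ * (P * Δ)).trace := by
  rw [← Matrix.trace_transpose (P * (V * Δᵀ)), Matrix.transpose_mul, Matrix.transpose_mul,
    Matrix.transpose_transpose, hP, Matrix.mul_assoc, Matrix.trace_mul_comm, Matrix.mul_assoc]

lemma conv2 {k l : Type*} [Fintype k] [Fintype l]
    (P : Matrix k k ℝ) (W : Matrix l k ℝ) (Δ : Matrix k l ℝ) :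
    (P * (Δ * W)).trace = (W * (P * Δ)).trace := by
  rw [Matrix.trace_mul_comm, Matrix.mul_assoc, Matrix.trace_mul_comm, Matrix.mul_assoc]

/-- Differentiability and gradient of the LD-infomax objective
`F(S) = (1/2) log det(R̂_s + εI) − (1/2) log det(R̂_e + εI)` with
`∇_S F = (1/N)(R̂_s + εI)⁻¹ S C − (1/N)(R̂_e + εI)⁻¹ (S − R̂_sy (R̂_y + εI)⁻¹ Y) C`. -/
theorem ld_infomax_objective_gradient
    {r M N : ℕ} (hN : 1 ≤ N) (ε : ℝ) (hε : 0 < ε)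
    (Y : Matrix (Fin M) (Fin N) ℝ)
    (C : Matrix (Fin N) (Fin N) ℝ)
    (hC : C = 1 - (1 / N : ℝ) • Matrix.vecMulVec (fun _ => (1 : ℝ))
        (fun _ => (1 : ℝ)))
    (Rs : Matrix (Fin r) (Fin N) ℝ → Matrix (Fin r) (Fin r) ℝ)
    (hRs : Rs = fun S => (1 / N : ℝ) • (S * C * Sᵀ))
    (Rsy : Matrix (Fin r) (Fin N) ℝ → Matrix (Fin r) (Fin M) ℝ)
    (hRsy : Rsy = fun S => (1 / N : ℝ) • (S * C * Yᵀ))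
    (Ry : Matrix (Fin M) (Fin M) ℝ)
    (hRy : Ry = (1 / N : ℝ) • (Y * C * Yᵀ))
    (Re : Matrix (Fin r) (Fin N) ℝ → Matrix (Fin r) (Fin r) ℝ)
    (hRe : Re = fun S => Rs S
        - Rsy S * (Ry + ε • (1 : Matrix (Fin M) (Fin M) ℝ))⁻¹ * (Rsy S)ᵀ)
    (F : Matrix (Fin r) (Fin N) ℝ → ℝ)
    (hF : F = fun S =>
        (1 / 2) * Real.log (Rs S + ε • (1 : Matrix (Fin r) (Fin r) ℝ)).det
        - (1 / 2) * Real.log (Re S + ε • (1 : Matrix (Fin r) (Fin r) ℝ)).det)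
    (S : Matrix (Fin r) (Fin N) ℝ)
    (hRepd : (Re S + ε • (1 : Matrix (Fin r) (Fin r) ℝ)).PosDef)
    (G : Matrix (Fin r) (Fin N) ℝ)
    (hG : G = (1 / N : ℝ) •
        ((Rs S + ε • (1 : Matrix (Fin r) (Fin r) ℝ))⁻¹ * S * C)
      - (1 / N : ℝ) •
        ((Re S + ε • (1 : Matrix (Fin r) (Fin r) ℝ))⁻¹
          * (S - Rsy S * (Ry + ε • (1 : Matrix (Fin M) (Fin M) ℝ))⁻¹ * Y) * C)) :
    ∃ L : Matrix (Fin r) (Fin N) ℝ →L[ℝ] ℝ,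
      HasFDerivAt F L S ∧ ∀ Δ : Matrix (Fin r) (Fin N) ℝ,
        L Δ = (Gᵀ * Δ).trace := by
  have hNz : (N : ℝ) ≠ 0 := Nat.cast_ne_zero.2 (by omega)
  -- symmetry and idempotency of C
  have hCT : Cᵀ = C := by
    subst hC
    ext i j
    simp [Matrix.transpose_apply, Matrix.one_apply, Matrix.vecMulVec_apply, eq_comm]
  have hJJ : (Matrix.vecMulVec (fun _ : Fin N => (1:ℝ)) (fun _ : Fin N => (1:ℝ)))
      * (Matrix.vecMulVec (fun _ : Fin N => (1:ℝ)) (fun _ : Fin N => (1:ℝ)))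
      = (N : ℝ) • Matrix.vecMulVec (fun _ : Fin N => (1:ℝ)) (fun _ : Fin N => (1:ℝ)) := by
    ext i j
    simp [Matrix.mul_apply, Matrix.vecMulVec_apply]
  have hCC : C * C = C := by
    rw [hC]
    simp only [Matrix.sub_mul, Matrix.mul_sub, Matrix.one_mul, Matrix.mul_one,
      Matrix.smul_mul, Matrix.mul_smul, hJJ, smul_smul]
    have hc : (1/N : ℝ) * N = 1 := by field_simp
    rw [hc, one_smul, sub_self, smul_zero, sub_zero]
  -- positive definiteness of Rs S + ε I
  have hSCC : S * C * Sᵀ = (S * C) * (S * C)ᴴ := by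
    rw [Matrix.conjTranspose_eq_transpose_of_trivial, Matrix.transpose_mul, hCT]
    conv_rhs => rw [← Matrix.mul_assoc, Matrix.mul_assoc S C C, hCC]
  have hRsPSD : ((1/N : ℝ) • (S * C * Sᵀ)).PosSemidef := by
    have h2 := Matrix.posSemidef_self_mul_conjTranspose (S * C)
    rw [← hSCC] at h2
    refine Matrix.posSemidef_iff_dotProduct_mulVec.mpr ⟨?_, fun x => ?_⟩
    · unfold Matrix.IsHermitian
      rw [Matrix.conjTranspose_smul]
      rw [h2.1]
      simp
    · rw [Matrix.smul_mulVec, dotProduct_smul]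
      exact mul_nonneg (by positivity) ((Matrix.posSemidef_iff_dotProduct_mulVec.mp h2).2 x)
  have hεpd : (ε • (1 : Matrix (Fin r) (Fin r) ℝ)).PosDef := by
    refine Matrix.posDef_iff_dotProduct_mulVec.mpr ⟨?_, fun x hx => ?_⟩
    · unfold Matrix.IsHermitian
      rw [Matrix.conjTranspose_smul]
      simp
    · rw [Matrix.smul_mulVec, dotProduct_smul, Matrix.one_mulVec]
      exact mul_pos hε (Matrix.dotProduct_star_self_pos_iff.2 hx)
  have hApd : ((1/N : ℝ) • (S * C * Sᵀ) + ε • (1 : Matrix (Fin r) (Fin r) ℝ)).PosDef :=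
    Matrix.PosDef.posSemidef_add hRsPSD hεpd
  subst hRs hRsy hRe hF hG
  have hdetA : ((1/N : ℝ) • (S * C * Sᵀ) + ε • (1 : Matrix (Fin r) (Fin r) ℝ)).det ≠ 0 :=
    ne_of_gt hApd.det_pos
  have hdetB : ((1/N : ℝ) • (S * C * Sᵀ)
      - (1/N : ℝ) • (S * C * Yᵀ) * (Ry + ε • (1 : Matrix (Fin M) (Fin M) ℝ))⁻¹
        * ((1/N : ℝ) • (S * C * Yᵀ))ᵀ
      + ε • (1 : Matrix (Fin r) (Fin r) ℝ)).det ≠ 0 :=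
    ne_of_gt (Matrix.PosDef.det_pos hRepd)
  have h_t : HasFDerivAt (fun s : Matrix (Fin r) (Fin N) ℝ => sᵀ)
      (tCLM (m := Fin r) (n := Fin N)) S :=
    (tCLM (m := Fin r) (n := Fin N)).hasFDerivAt
  have h_sc : HasFDerivAt (fun s : Matrix (Fin r) (Fin N) ℝ => s * C)
      (rmulCLM (m := Fin r) C) S :=
    (rmulCLM (m := Fin r) C).hasFDerivAt
  have h_q := mulB.hasFDerivAt_of_bilinear h_sc h_t
  have hAd := (h_q.const_smul (1/N : ℝ)).add_const (ε • (1 : Matrix (Fin r) (Fin r) ℝ))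
  obtain ⟨L1, hL1, hL1ev⟩ := logdet_comp hAd hdetA
  have h_syQ : HasFDerivAt
      (fun s : Matrix (Fin r) (Fin N) ℝ =>
        ((1/N : ℝ) • (s * C * Yᵀ)) * (Ry + ε • (1 : Matrix (Fin M) (Fin M) ℝ))⁻¹)
      ((rmulCLM (m := Fin r) ((Ry + ε • (1 : Matrix (Fin M) (Fin M) ℝ))⁻¹)).comp
        ((1/N : ℝ) • ((rmulCLM (m := Fin r) Yᵀ).comp (rmulCLM (m := Fin r) C)))) S :=
    ((rmulCLM (m := Fin r) ((Ry + ε • (1 : Matrix (Fin M) (Fin M) ℝ))⁻¹)).comp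
        ((1/N : ℝ) • ((rmulCLM (m := Fin r) Yᵀ).comp (rmulCLM (m := Fin r) C)))).hasFDerivAt
  have h_syT : HasFDerivAt
      (fun s : Matrix (Fin r) (Fin N) ℝ => ((1/N : ℝ) • (s * C * Yᵀ))ᵀ)
      ((tCLM (m := Fin r) (n := Fin M)).comp
        ((1/N : ℝ) • ((rmulCLM (m := Fin r) Yᵀ).comp (rmulCLM (m := Fin r) C)))) S :=
    ((tCLM (m := Fin r) (n := Fin M)).comp
        ((1/N : ℝ) • ((rmulCLM (m := Fin r) Yᵀ).comp (rmulCLM (m := Fin r) C)))).hasFDerivAt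
  have h_ree := mulB.hasFDerivAt_of_bilinear h_syQ h_syT
  have hBd := ((h_q.const_smul (1/N : ℝ)).sub h_ree).add_const
    (ε • (1 : Matrix (Fin r) (Fin r) ℝ))
  obtain ⟨L2, hL2, hL2ev⟩ := logdet_comp hBd hdetB
  have hFin := (hL1.const_mul (1/2 : ℝ)).sub (hL2.const_mul (1/2 : ℝ))
  refine ⟨_, hFin, fun Δ => ?_⟩
  have e1 : L1 Δ = (((1/N : ℝ) • (S * C * Sᵀ) + ε • (1 : Matrix (Fin r) (Fin r) ℝ))⁻¹
      * ((1/N : ℝ) • (S * C * Δᵀ + Δ * C * Sᵀ))).trace := hL1ev Δ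
  have e2 : L2 Δ = (((1/N : ℝ) • (S * C * Sᵀ)
      - (1/N : ℝ) • (S * C * Yᵀ) * (Ry + ε • (1 : Matrix (Fin M) (Fin M) ℝ))⁻¹
        * ((1/N : ℝ) • (S * C * Yᵀ))ᵀ
      + ε • (1 : Matrix (Fin r) (Fin r) ℝ))⁻¹
      * ((1/N : ℝ) • (S * C * Δᵀ + Δ * C * Sᵀ)
        - ((1/N : ℝ) • (S * C * Yᵀ) * (Ry + ε • (1 : Matrix (Fin M) (Fin M) ℝ))⁻¹
            * ((1/N : ℝ) • (Δ * C * Yᵀ))ᵀ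
          + (1/N : ℝ) • (Δ * C * Yᵀ) * (Ry + ε • (1 : Matrix (Fin M) (Fin M) ℝ))⁻¹
            * ((1/N : ℝ) • (S * C * Yᵀ))ᵀ))).trace := hL2ev Δ
  have hAT : ((1/N : ℝ) • (S * C * Sᵀ) + ε • (1 : Matrix (Fin r) (Fin r) ℝ))ᵀ
      = (1/N : ℝ) • (S * C * Sᵀ) + ε • 1 := by
    simp only [Matrix.transpose_add, Matrix.transpose_smul, Matrix.transpose_one,
      Matrix.transpose_mul, Matrix.transpose_transpose, hCT, Matrix.mul_assoc]
  have hAiT : (((1/N : ℝ) • (S * C * Sᵀ) + ε • (1 : Matrix (Fin r) (Fin r) ℝ))⁻¹)ᵀ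
      = ((1/N : ℝ) • (S * C * Sᵀ) + ε • (1 : Matrix (Fin r) (Fin r) ℝ))⁻¹ := by
    rw [Matrix.transpose_nonsing_inv, hAT]
  have hRyT : (Ry + ε • (1 : Matrix (Fin M) (Fin M) ℝ))ᵀ = Ry + ε • 1 := by
    subst hRy
    simp only [Matrix.transpose_add, Matrix.transpose_smul, Matrix.transpose_one,
      Matrix.transpose_mul, Matrix.transpose_transpose, hCT, Matrix.mul_assoc]
  have hQT : (((Ry + ε • (1 : Matrix (Fin M) (Fin M) ℝ))⁻¹)ᵀ)
      = (Ry + ε • (1 : Matrix (Fin M) (Fin M) ℝ))⁻¹ := by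
    rw [Matrix.transpose_nonsing_inv, hRyT]
  have hBiT : ((((1/N : ℝ) • (S * C * Sᵀ)
      - (1/N : ℝ) • (S * C * Yᵀ) * (Ry + ε • (1 : Matrix (Fin M) (Fin M) ℝ))⁻¹
        * ((1/N : ℝ) • (S * C * Yᵀ))ᵀ
      + ε • (1 : Matrix (Fin r) (Fin r) ℝ))⁻¹)ᵀ)
      = ((1/N : ℝ) • (S * C * Sᵀ)
      - (1/N : ℝ) • (S * C * Yᵀ) * (Ry + ε • (1 : Matrix (Fin M) (Fin M) ℝ))⁻¹
        * ((1/N : ℝ) • (S * C * Yᵀ))ᵀ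
      + ε • (1 : Matrix (Fin r) (Fin r) ℝ))⁻¹ := by
    rw [Matrix.transpose_nonsing_inv]
    congr 1
    simp only [Matrix.transpose_add, Matrix.transpose_sub, Matrix.transpose_smul,
      Matrix.transpose_one, Matrix.transpose_mul, Matrix.transpose_transpose, hCT, hQT,
      Matrix.mul_assoc]
  change (1/2 : ℝ) • L1 Δ - (1/2 : ℝ) • L2 Δ = _
  rw [e1, e2]
  simp only [Matrix.smul_mul, Matrix.mul_smul, Matrix.mul_add, Matrix.add_mul,
    Matrix.mul_sub, Matrix.sub_mul, Matrix.trace_add, Matrix.trace_sub, Matrix.trace_smul,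
    Matrix.transpose_smul, Matrix.transpose_sub, Matrix.transpose_mul,
    Matrix.transpose_transpose, smul_eq_mul, smul_smul, hCT, hQT, hAiT, hBiT,
    Matrix.mul_assoc]
  simp only [Matrix.smul_mul, Matrix.mul_smul, smul_smul, Matrix.transpose_smul,
    Matrix.transpose_mul, Matrix.transpose_transpose, hCT, hQT,
    Matrix.mul_assoc] at hAiT hBiT
  set Q : Matrix (Fin M) (Fin M) ℝ := (Ry + ε • (1 : Matrix (Fin M) (Fin M) ℝ))⁻¹ with hQdef
  set Ai : Matrix (Fin r) (Fin r) ℝ :=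
    ((1/N : ℝ) • (S * (C * Sᵀ)) + ε • (1 : Matrix (Fin r) (Fin r) ℝ))⁻¹ with hAidef
  set Bi : Matrix (Fin r) (Fin r) ℝ :=
    ((1/N : ℝ) • (S * (C * Sᵀ))
      - ((1/N : ℝ) * (1/N : ℝ)) • (S * (C * (Yᵀ * (Q * (Y * (C * Sᵀ))))))
      + ε • (1 : Matrix (Fin r) (Fin r) ℝ))⁻¹ with hBidef
  simp only [hAiT, hBiT]
  have ha1 : (Ai * (S * (C * Δᵀ))).trace = (C * (Sᵀ * (Ai * Δ))).trace := by
    rw [← Matrix.mul_assoc S C Δᵀ, conv1 Ai hAiT (S * C) Δ]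
    simp only [Matrix.transpose_mul, hCT, Matrix.mul_assoc]
  have ha2 : (Ai * (Δ * (C * Sᵀ))).trace = (C * (Sᵀ * (Ai * Δ))).trace := by
    rw [conv2]
    simp only [Matrix.mul_assoc]
  have hb1 : (Bi * (S * (C * Δᵀ))).trace = (C * (Sᵀ * (Bi * Δ))).trace := by
    rw [← Matrix.mul_assoc S C Δᵀ, conv1 Bi hBiT (S * C) Δ]
    simp only [Matrix.transpose_mul, hCT, Matrix.mul_assoc]
  have hb2 : (Bi * (Δ * (C * Sᵀ))).trace = (C * (Sᵀ * (Bi * Δ))).trace := by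
    rw [conv2]
    simp only [Matrix.mul_assoc]
  have hc1 : (Bi * (S * (C * (Yᵀ * (Q * (Y * (C * Δᵀ))))))).trace
      = (C * (Yᵀ * (Q * (Y * (C * (Sᵀ * (Bi * Δ))))))).trace := by
    have hx : S * (C * (Yᵀ * (Q * (Y * (C * Δᵀ)))))
        = (S * (C * (Yᵀ * (Q * (Y * C))))) * Δᵀ := by
      simp only [Matrix.mul_assoc]
    rw [hx, conv1 Bi hBiT _ Δ]
    simp only [Matrix.transpose_mul, Matrix.transpose_transpose, hCT, hQT, Matrix.mul_assoc]
  have hc2 : (Bi * (Δ * (C * (Yᵀ * (Q * (Y * (C * Sᵀ))))))).trace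
      = (C * (Yᵀ * (Q * (Y * (C * (Sᵀ * (Bi * Δ))))))).trace := by
    rw [conv2]
    simp only [Matrix.mul_assoc]
  rw [ha1, ha2, hb1, hb2, hc1, hc2]
  ring
end
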